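/- arXiv:2508.00653 — 4 statements merged into one kernel-verified Lean document; each statement's English description precedes it below -/
import Mathlib

section
/- Let Δ' be a set, m ∈ ℕ, level : Δ' → Fin (2^m) a function, and F ⊆ Δ' × Δ' a relation such that: (i) every element of level < 2^m − 1 has exactly one F-successor, (ii) elements of level 2^m − 1 have no F-successor, (iii) every element of level > 0 has exactly one F-predecessor, (iv) elements of level 0 have no F-predecessor, and (v) F-edges increase level by exactly 1. Then, letting ≈ be the equivalence relation generated by F and Δ the set of ≈-classes, the map δ' ↦ ([δ']_≈, level(δ')) is a bijection from Δ' to Δ × Fin (2^m). -/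
/-!
Walking down unique predecessors from `x` for `level x` steps reaches a level-0 root. The root is
unchanged along `F`-edges, hence constant on `≈`-classes, and by uniqueness of successors `x` is
determined by its root and its level: this gives injectivity. Conversely, climbing along successors
from any element of a class reaches every level, which gives surjectivity.
-/

namespace Relation

variable {α : Type*} {F : α → α → Prop} {level : α → ℕ}

open Classical in
noncomputable def chainPred (F : α → α → Prop) (x : α) : α :=
  if h : ∃ y, F y x then h.choose else x

noncomputable def chainRoot (F : α → α → Prop) (level : α → ℕ) (x : α) : α :=
  (chainPred F)^[level x] x

theorem chainPred_rel {x : α} (h : ∃ y, F y x) : F (chainPred F x) x := by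
  rw [chainPred, dif_pos h]
  exact h.choose_spec

theorem chainPred_eq_of_rel (hF : Relator.LeftUnique F) {x y : α} (h : F y x) :
    chainPred F x = y :=
  hF (chainPred_rel ⟨y, h⟩) h

theorem eqvGen_chainPred (x : α) : EqvGen F x (chainPred F x) := by
  by_cases h : ∃ y, F y x
  · exact .symm _ _ (.rel _ _ (chainPred_rel h))
  · rw [chainPred, dif_neg h]
    exact .refl x

theorem eqvGen_chainRoot (x : α) : EqvGen F x (chainRoot F level x) := by
  rw [chainRoot]
  induction level x with
  | zero => exact .refl x
  | succ n ih =>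
    rw [Function.iterate_succ_apply']
    exact .trans _ _ _ ih (eqvGen_chainPred _)

section Levels

variable (hstep : ∀ x y, F x y → level y = level x + 1)
include hstep

theorem level_chainPred (hpred : ∀ x, 0 < level x → ∃ y, F y x) (x : α) :
    level (chainPred F x) = level x - 1 := by
  by_cases h : ∃ y, F y x
  · have := hstep _ _ (chainPred_rel h)
    omega
  · have : level x = 0 := Nat.eq_zero_of_not_pos fun hx => h (hpred x hx)
    rw [chainPred, dif_neg h]
    omega

theorem level_chainRoot (hpred : ∀ x, 0 < level x → ∃ y, F y x) (x : α) :
    level (chainRoot F level x) = 0 := by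
  suffices ∀ n, level ((chainPred F)^[n] x) = level x - n by
    rw [chainRoot, this, Nat.sub_self]
  intro n
  induction n with
  | zero => rfl
  | succ n ih =>
    rw [Function.iterate_succ_apply', level_chainPred hstep hpred, ih]
    omega

theorem chainRoot_eq_of_rel (hF : Relator.LeftUnique F) {x y : α} (h : F x y) :
    chainRoot F level y = chainRoot F level x := by
  rw [chainRoot, chainRoot, hstep _ _ h, Function.iterate_succ_apply,
    chainPred_eq_of_rel hF h]

theorem chainRoot_eq_of_eqvGen (hF : Relator.LeftUnique F) {x y : α} (h : EqvGen F x y) :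
    chainRoot F level x = chainRoot F level y :=
  (Setoid.ker (chainRoot F level)).iseqv.eqvGen_iff.1 <|
    h.mono fun _ _ hab => (chainRoot_eq_of_rel hstep hF hab).symm

theorem eq_of_chainRoot_eq_of_level_eq (hpred : ∀ x, 0 < level x → ∃ y, F y x)
    (hl : Relator.LeftUnique F) (hr : Relator.RightUnique F) :
    ∀ (n : ℕ) {x y : α}, level x = n → level y = n →
      chainRoot F level x = chainRoot F level y → x = y := by
  intro n
  induction n with
  | zero =>
    intro x y hx hy hroot
    simpa [chainRoot, hx, hy] using hroot
  | succ n ih =>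
    intro x y hx hy hroot
    have hFx := chainPred_rel (hpred x (by omega))
    have hFy := chainPred_rel (hpred y (by omega))
    have hpred_eq : chainPred F x = chainPred F y := by
      refine ih ?_ ?_ ?_
      · rw [level_chainPred hstep hpred, hx]; rfl
      · rw [level_chainPred hstep hpred, hy]; rfl
      · rw [← chainRoot_eq_of_rel hstep hl hFx, ← chainRoot_eq_of_rel hstep hl hFy, hroot]
    exact hr hFx (hpred_eq ▸ hFy)

theorem eq_of_eqvGen_of_level_eq (hpred : ∀ x, 0 < level x → ∃ y, F y x)
    (hl : Relator.LeftUnique F) (hr : Relator.RightUnique F) {x y : α} (h : EqvGen F x y)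
    (hlevel : level x = level y) : x = y :=
  eq_of_chainRoot_eq_of_level_eq hstep hpred hl hr _ rfl hlevel.symm
    (chainRoot_eq_of_eqvGen hstep hl h)

theorem exists_eqvGen_level_eq {top : ℕ} (hsucc : ∀ x, level x < top → ∃ y, F x y)
    (hpred : ∀ x, 0 < level x → ∃ y, F y x) (x : α) :
    ∀ k ≤ top, ∃ y, EqvGen F x y ∧ level y = k := by
  intro k
  induction k with
  | zero => exact fun _ => ⟨_, eqvGen_chainRoot x, level_chainRoot hstep hpred x⟩
  | succ k ih =>
    intro hk
    obtain ⟨y, hxy, hy⟩ := ih (by omega)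
    obtain ⟨z, hyz⟩ := hsucc y (by omega)
    exact ⟨z, .trans _ _ _ hxy (.rel _ _ hyz), by rw [hstep _ _ hyz, hy]⟩

end Levels

end Relation

open Relation in
theorem stmt7_general {Δ' : Type*} (m : ℕ) (level : Δ' → Fin (2 ^ m))
    (F : Δ' → Δ' → Prop)
    (h1 : ∀ x, (level x : ℕ) < 2 ^ m - 1 → ∃! y, F x y)
    (h3 : ∀ x, 0 < (level x : ℕ) → ∃! y, F y x)
    (h5 : ∀ x y, F x y → (level y : ℕ) = (level x : ℕ) + 1) :
    Function.Bijective
      (fun x : Δ' => (Quotient.mk (Relation.EqvGen.setoid F) x, level x)) := by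
  have hpred : ∀ x, 0 < (level x : ℕ) → ∃ y, F y x := fun x hx => (h3 x hx).exists
  have hl : Relator.LeftUnique F := fun a b c hac hbc =>
    (h3 c (by rw [h5 _ _ hac]; omega)).unique hac hbc
  have hr : Relator.RightUnique F := fun a b c hab hac =>
    (h1 a (by have := (level b).isLt; rw [h5 _ _ hab] at this; omega)).unique hab hac
  constructor
  · intro x y hxy
    obtain ⟨hclass, hlevel⟩ := Prod.mk.inj hxy
    exact eq_of_eqvGen_of_level_eq h5 hpred hl hr (Quotient.exact hclass) (congrArg Fin.val hlevel)
  · rintro ⟨q, k⟩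
    induction q using Quotient.ind with
    | _ x =>
      obtain ⟨y, hxy, hy⟩ := exists_eqvGen_level_eq h5 (fun x hx => (h1 x hx).exists) hpred x k
        (by have := k.isLt; omega)
      exact ⟨y, Prod.ext (Quotient.sound (.symm _ _ hxy)) (Fin.ext hy)⟩

/-- Core of Theorem 8: a domain equipped with a level function into `Fin (2^m)` and a
successor relation `F` forming chains (unique successors/predecessors except at the
extremal levels, levels increasing by one along `F`) is in bijection with
(equivalence classes generated by `F`) × `Fin (2^m)` via `δ' ↦ ([δ'], level δ')`. -/
theorem stmt7 {Δ' : Type*} (m : ℕ) (level : Δ' → Fin (2 ^ m))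
    (F : Δ' → Δ' → Prop)
    (h1 : ∀ x, (level x : ℕ) < 2 ^ m - 1 → ∃! y, F x y)
    (h2 : ∀ x, (level x : ℕ) = 2 ^ m - 1 → ∀ y, ¬ F x y)
    (h3 : ∀ x, 0 < (level x : ℕ) → ∃! y, F y x)
    (h4 : ∀ x, (level x : ℕ) = 0 → ∀ y, ¬ F y x)
    (h5 : ∀ x y, F x y → (level y : ℕ) = (level x : ℕ) + 1) :
    Function.Bijective
      (fun x : Δ' => (Quotient.mk (Relation.EqvGen.setoid F) x, level x)) :=
  stmt7_general m level F h1 h3 h5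
end

section
/- With F-chains as above, for every element δ' and every i < 2^m, there exists an element δ'' in the same F-generated equivalence class as δ' with level(δ'') = i. -/
/-!
Every `F`-step raises the level by one. Following predecessors from `x` descends to level `0`,
and following successors from there climbs to any level up to the top; both paths start at the
same level-`0` element, so `x` and the endpoint lie in one class.
-/

open Relation

section GradedRelation

variable {α : Type*} {F : α → α → Prop} {level : α → ℕ}

theorem exists_reflTransGen_level_eq_zero
    (hF : ∀ x y, F x y → level y = level x + 1)
    (hpred : ∀ x, 0 < level x → ∃ y, F y x) (x : α) :
    ∃ z, ReflTransGen F z x ∧ level z = 0 := by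
  induction hn : level x generalizing x with
  | zero => exact ⟨x, .refl, hn⟩
  | succ n ih =>
    obtain ⟨y, hyx⟩ := hpred x (by omega)
    obtain ⟨z, hzy, hz⟩ := ih y (by have := hF y x hyx; omega)
    exact ⟨z, hzy.tail hyx, hz⟩

theorem exists_reflTransGen_level_eq_of_le {N : ℕ}
    (hF : ∀ x y, F x y → level y = level x + 1)
    (hsucc : ∀ x, level x < N → ∃ y, F x y) (x : α) {k : ℕ}
    (hxk : level x ≤ k) (hkN : k ≤ N) :
    ∃ y, ReflTransGen F x y ∧ level y = k := by
  induction k, hxk using Nat.le_induction with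
  | base => exact ⟨x, .refl, rfl⟩
  | succ k _ ih =>
    obtain ⟨y, hxy, hy⟩ := ih (by omega)
    obtain ⟨w, hyw⟩ := hsucc y (by omega)
    exact ⟨w, hxy.tail hyw, by rw [hF y w hyw, hy]⟩

theorem exists_eqvGen_level_eq {N : ℕ}
    (hF : ∀ x y, F x y → level y = level x + 1)
    (hpred : ∀ x, 0 < level x → ∃ y, F y x)
    (hsucc : ∀ x, level x < N → ∃ y, F x y) (x : α) {k : ℕ} (hkN : k ≤ N) :
    ∃ y, EqvGen F x y ∧ level y = k := by
  obtain ⟨z, hzx, hz⟩ := exists_reflTransGen_level_eq_zero hF hpred x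
  obtain ⟨y, hzy, hy⟩ := exists_reflTransGen_level_eq_of_le hF hsucc z (by omega) hkN
  have hxz : EqvGen F x z := (EqvGen.reflTransGen_le_eqvGen F _ _ hzx).symm
  exact ⟨y, hxz.trans _ _ _ (EqvGen.reflTransGen_le_eqvGen F _ _ hzy), hy⟩

end GradedRelation

theorem stmt10_general {Δ' : Type*} (m : ℕ) (level : Δ' → Fin (2 ^ m))
    (F : Δ' → Δ' → Prop)
    (h1 : ∀ x, (level x : ℕ) < 2 ^ m - 1 → ∃! y, F x y)
    (h3 : ∀ x, 0 < (level x : ℕ) → ∃! y, F y x)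
    (h5 : ∀ x y, F x y → (level y : ℕ) = (level x : ℕ) + 1) :
    ∀ (x : Δ') (i : Fin (2 ^ m)), ∃ y : Δ', Relation.EqvGen F x y ∧ level y = i := by
  intro x i
  have hi : (i : ℕ) ≤ 2 ^ m - 1 := by omega
  obtain ⟨y, hxy, hy⟩ := exists_eqvGen_level_eq (level := fun x => (level x : ℕ))
    h5 (fun x hx => (h3 x hx).exists) (fun x hx => (h1 x hx).exists) x hi
  exact ⟨y, hxy, Fin.ext hy⟩

/-- Surjectivity part of the stacked-bijection lemma: every `F`-generated equivalence
class realizes every level `i < 2^m`. -/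
theorem stmt10 {Δ' : Type*} (m : ℕ) (level : Δ' → Fin (2 ^ m))
    (F : Δ' → Δ' → Prop)
    (h1 : ∀ x, (level x : ℕ) < 2 ^ m - 1 → ∃! y, F x y)
    (h2 : ∀ x, (level x : ℕ) = 2 ^ m - 1 → ∀ y, ¬ F x y)
    (h3 : ∀ x, 0 < (level x : ℕ) → ∃! y, F y x)
    (h4 : ∀ x, (level x : ℕ) = 0 → ∀ y, ¬ F y x)
    (h5 : ∀ x y, F x y → (level y : ℕ) = (level x : ℕ) + 1) :
    ∀ (x : Δ') (i : Fin (2 ^ m)), ∃ y : Δ', Relation.EqvGen F x y ∧ level y = i :=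
  stmt10_general m level F h1 h3 h5
end

section
/- Let M = (Δ, Π, σ, γ) be a standpoint structure with 2^m precisifications π_0, …, π_{2^m−1}, and let I^M be its stacked interpretation with domain Δ × Fin(2^m), where L_j holds of (δ, i) iff bit j of i is 1, F relates (δ, i) to (δ, i+1), unary P holds of (δ, i) iff δ ∈ P^{γ(π_i)}, and binary P relates (δ₁, i) to (δ₂, i) iff (δ₁, δ₂) ∈ P^{γ(π_i)}. Then I^M satisfies each of the six clauses (F1)–(F6) of the stacked formula φ^m_stack: (F1) every element with some j-th L-bit 0 has exactly one F-successor; (F2) elements with all L-bits 1 have no F-successor; (F3) every element with some L-bit 1 has exactly one F-predecessor; (F4) elements with all L-bits 0 have no F-predecessor; (F5) along F-edges, bit j is preserved iff some lower bit j' < j is 0; (F6) every binary predicate P ∈ P relates only elements with identical L-bits. -/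
/-- The `L_j` predicate of the stacked interpretation: `(δ, i)` satisfies `L_j` iff the
`j`-th bit of `i` is `1`. -/
def Lbit {Δ : Type*} {m : ℕ} (j : Fin m) (p : Δ × Fin (2 ^ m)) : Prop :=
  Nat.testBit (p.2 : ℕ) (j : ℕ)

/-- The `F` relation of the stacked interpretation: `(δ, i)` is related to `(δ, i+1)`. -/
def Fedge {Δ : Type*} {m : ℕ} (p q : Δ × Fin (2 ^ m)) : Prop :=
  p.1 = q.1 ∧ (q.2 : ℕ) = (p.2 : ℕ) + 1

/-!
Adding one to a binary numeral flips bit `j` exactly when every lower bit is `1` (the carry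
reaches `j`); this is (F5). The other clauses only use that the all-ones index is `2^m - 1`
and the all-zeros index is `0`, the two ends of the `F`-chain `0 → 1 → ⋯ → 2^m - 1`.
-/

namespace Nat

theorem testBit_succ_eq_iff (n j : ℕ) :
    (n + 1).testBit j = n.testBit j ↔ ∃ j' < j, n.testBit j' = false := by
  induction j generalizing n with
  | zero =>
    simp only [testBit_zero, decide_eq_decide, not_lt_zero, false_and, exists_const, iff_false]
    omega
  | succ j ih =>
    rw [testBit_add_one, testBit_add_one, exists_lt_succ_left]
    rcases even_or_odd' n with ⟨k, rfl | rfl⟩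
    · have : (2 * k + 1) / 2 = 2 * k / 2 := by omega
      simp [this]
    · have : (2 * k + 1 + 1) / 2 = (2 * k + 1) / 2 + 1 := by omega
      simp [this, ih, testBit_add_one]

theorem forall_testBit_iff_eq_two_pow_sub_one {n m : ℕ} (hn : n < 2 ^ m) :
    (∀ j < m, n.testBit j = true) ↔ n = 2 ^ m - 1 := by
  refine ⟨fun h => eq_of_testBit_eq fun j => ?_, fun h j hj => by simp [h, hj]⟩
  rw [testBit_two_pow_sub_one]
  by_cases hj : j < m
  · simp [h j hj, hj]
  · simp [hj, testBit_lt_two_pow (hn.trans_le (pow_le_pow_right₀ one_le_two (not_lt.mp hj)))]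

theorem forall_testBit_false_iff_eq_zero {n m : ℕ} (hn : n < 2 ^ m) :
    (∀ j < m, n.testBit j = false) ↔ n = 0 := by
  refine ⟨fun h => eq_of_testBit_eq fun j => ?_, fun h j _ => by simp [h]⟩
  rw [zero_testBit]
  by_cases hj : j < m
  · exact h j hj
  · exact testBit_lt_two_pow (hn.trans_le (pow_le_pow_right₀ one_le_two (not_lt.mp hj)))

end Nat

section Stacked

variable {Δ : Type*} {m : ℕ}

theorem forall_Lbit_iff {p : Δ × Fin (2 ^ m)} :
    (∀ j : Fin m, Lbit j p) ↔ (p.2 : ℕ) = 2 ^ m - 1 := by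
  rw [← Nat.forall_testBit_iff_eq_two_pow_sub_one p.2.isLt, Fin.forall_iff]
  rfl

theorem forall_not_Lbit_iff {p : Δ × Fin (2 ^ m)} :
    (∀ j : Fin m, ¬ Lbit j p) ↔ (p.2 : ℕ) = 0 := by
  rw [← Nat.forall_testBit_false_iff_eq_zero p.2.isLt, Fin.forall_iff]
  simp [Lbit]

theorem exists_Fedge_from_iff {p : Δ × Fin (2 ^ m)} :
    (∃ q, Fedge p q) ↔ (p.2 : ℕ) + 1 < 2 ^ m :=
  ⟨fun ⟨q, _, hq⟩ => hq ▸ q.2.isLt, fun h => ⟨(p.1, ⟨p.2 + 1, h⟩), rfl, rfl⟩⟩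

theorem exists_Fedge_to_iff {q : Δ × Fin (2 ^ m)} :
    (∃ p, Fedge p q) ↔ (q.2 : ℕ) ≠ 0 :=
  ⟨fun ⟨p, _, hp⟩ => by omega,
    fun h => ⟨(q.1, ⟨q.2 - 1, by omega⟩), rfl, by dsimp only; omega⟩⟩

theorem Fedge.right_unique {p q q' : Δ × Fin (2 ^ m)} (h : Fedge p q) (h' : Fedge p q') :
    q = q' :=
  Prod.ext (h.1.symm.trans h'.1) (Fin.ext (h.2.trans h'.2.symm))

theorem Fedge.left_unique {p p' q : Δ × Fin (2 ^ m)} (h : Fedge p q) (h' : Fedge p' q) :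
    p = p' :=
  Prod.ext (h.1.trans h'.1.symm) (Fin.ext (by have := h.2; have := h'.2; omega))

theorem Fedge.Lbit_iff_Lbit_iff {p q : Δ × Fin (2 ^ m)} (h : Fedge p q) (j : Fin m) :
    (Lbit j p ↔ Lbit j q) ↔ ∃ j' : Fin m, j' < j ∧ ¬ Lbit j' p := by
  unfold Lbit
  rw [h.2, Bool.coe_iff_coe, eq_comm, Nat.testBit_succ_eq_iff, Fin.exists_iff]
  simp only [Fin.lt_def, Bool.not_eq_true]
  exact ⟨fun ⟨j', hj', hb⟩ => ⟨j', hj'.trans j.isLt, hj', hb⟩,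
    fun ⟨j', _, hj', hb⟩ => ⟨j', hj', hb⟩⟩

end Stacked

theorem stmt11_general {Δ B : Type*} (m : ℕ)
    (bI : Fin (2 ^ m) → B → Set (Δ × Δ)) :
    -- (F1) every element with some L-bit 0 has exactly one F-successor
    (∀ p : Δ × Fin (2 ^ m), (∃ j : Fin m, ¬ Lbit j p) → ∃! q, Fedge p q) ∧
    -- (F2) elements with all L-bits 1 have no F-successor
    (∀ p : Δ × Fin (2 ^ m), (∀ j : Fin m, Lbit j p) → ∀ q, ¬ Fedge p q) ∧
    -- (F3) every element with some L-bit 1 has exactly one F-predecessor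
    (∀ p : Δ × Fin (2 ^ m), (∃ j : Fin m, Lbit j p) → ∃! q, Fedge q p) ∧
    -- (F4) elements with all L-bits 0 have no F-predecessor
    (∀ p : Δ × Fin (2 ^ m), (∀ j : Fin m, ¬ Lbit j p) → ∀ q, ¬ Fedge q p) ∧
    -- (F5) along F-edges, bit j is preserved iff some lower bit j' < j is 0
    (∀ p q : Δ × Fin (2 ^ m), Fedge p q →
      ∀ j : Fin m, ((Lbit j p ↔ Lbit j q) ↔ ∃ j' : Fin m, j' < j ∧ ¬ Lbit j' p)) ∧
    -- (F6) every binary predicate relates only elements with identical L-bits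
    (∀ (P : B) (p q : Δ × Fin (2 ^ m)),
      (p.2 = q.2 ∧ (p.1, q.1) ∈ bI p.2 P) → ∀ j : Fin m, (Lbit j p ↔ Lbit j q)) := by
  refine ⟨fun p hp => ?_, fun p hp q hq => ?_, fun p hp => ?_, fun p hp q hq => ?_,
    fun p q h => h.Lbit_iff_Lbit_iff, fun P p q h j => by rw [Lbit, Lbit, h.1]⟩
  · have hsucc : (p.2 : ℕ) + 1 < 2 ^ m := by
      by_contra
      exact not_forall.mpr hp (forall_Lbit_iff.mpr (by have := p.2.isLt; omega))
    obtain ⟨q, hq⟩ := exists_Fedge_from_iff.mpr hsucc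
    exact ⟨q, hq, fun q' hq' => hq'.right_unique hq⟩
  · have hsucc := exists_Fedge_from_iff.mp ⟨q, hq⟩
    have hlast := forall_Lbit_iff.mp hp
    omega
  · have hpos : (p.2 : ℕ) ≠ 0 := fun h0 => not_forall_not.mpr hp (forall_not_Lbit_iff.mpr h0)
    obtain ⟨q, hq⟩ := exists_Fedge_to_iff.mpr hpos
    exact ⟨q, hq, fun q' hq' => hq'.left_unique hq⟩
  · exact exists_Fedge_to_iff.mp ⟨q, hq⟩ (forall_not_Lbit_iff.mp hp)

/-- Lemma 7: the stacked interpretation of a standpoint structure with `2^m`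
precisifications (indexed by `Fin (2^m)`, with unary interpretations `uI` and binary
interpretations `bI`) satisfies all six clauses (F1)–(F6) of `φ^m_stack`. -/
theorem stmt11 {Δ U B : Type*} (m : ℕ)
    (uI : Fin (2 ^ m) → U → Set Δ) (bI : Fin (2 ^ m) → B → Set (Δ × Δ)) :
    -- (F1) every element with some L-bit 0 has exactly one F-successor
    (∀ p : Δ × Fin (2 ^ m), (∃ j : Fin m, ¬ Lbit j p) → ∃! q, Fedge p q) ∧
    -- (F2) elements with all L-bits 1 have no F-successor
    (∀ p : Δ × Fin (2 ^ m), (∀ j : Fin m, Lbit j p) → ∀ q, ¬ Fedge p q) ∧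
    -- (F3) every element with some L-bit 1 has exactly one F-predecessor
    (∀ p : Δ × Fin (2 ^ m), (∃ j : Fin m, Lbit j p) → ∃! q, Fedge q p) ∧
    -- (F4) elements with all L-bits 0 have no F-predecessor
    (∀ p : Δ × Fin (2 ^ m), (∀ j : Fin m, ¬ Lbit j p) → ∀ q, ¬ Fedge q p) ∧
    -- (F5) along F-edges, bit j is preserved iff some lower bit j' < j is 0
    (∀ p q : Δ × Fin (2 ^ m), Fedge p q →
      ∀ j : Fin m, ((Lbit j p ↔ Lbit j q) ↔ ∃ j' : Fin m, j' < j ∧ ¬ Lbit j' p)) ∧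
    -- (F6) every binary predicate relates only elements with identical L-bits
    (∀ (P : B) (p q : Δ × Fin (2 ^ m)),
      (p.2 = q.2 ∧ (p.1, q.1) ∈ bI p.2 P) → ∀ j : Fin m, (Lbit j p ↔ Lbit j q)) :=
  stmt11_general m bI
end

section
/- Let M be a standpoint structure over unary and binary predicates including distinguished unary predicates E_0, …, E_ℓ, with 2^m precisifications, and let I_M be its stacked interpretation. Then all E_i are rigid in M (i.e., E_i^{γ(π)} is the same set for all precisifications π) if and only if I_M satisfies: for all x, y, if F(x, y) then for every i ≤ ℓ, E_i(x) ↔ E_i(y). -/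
theorem Fin.apply_eq_apply_of_forall_succ {α : Type*} {n : ℕ} {f : Fin n → α}
    (h : ∀ i j : Fin n, (j : ℕ) = i + 1 → f i = f j) (i j : Fin n) : f i = f j := by
  have eq_first : ∀ (k : ℕ) (hk : k < n), f ⟨k, hk⟩ = f ⟨0, k.zero_le.trans_lt hk⟩ := by
    intro k
    induction k with
    | zero => intro _; rfl
    | succ k ih =>
      intro hk
      rw [← h ⟨k, k.lt_succ_self.trans hk⟩ ⟨k + 1, hk⟩ rfl, ih]
  rw [eq_first i i.isLt, eq_first j j.isLt]

/-- Lemma 10: the distinguished predicates `E_0, …, E_ℓ` are rigid in a standpoint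
structure with `2^m` precisifications iff its stacked interpretation satisfies
`∀ x y, F(x,y) → ⋀_i (E_i(x) ↔ E_i(y))`, where in the stacked interpretation
`F` relates `(δ, i)` to `(δ, i+1)` and `E_i` holds of `(δ, j)` iff `δ ∈ E_i^{γ(π_j)}`. -/
theorem stmt12 {Δ : Type*} (m ℓ : ℕ)
    (E : Fin (ℓ + 1) → Fin (2 ^ m) → Set Δ) :
    (∀ (i : Fin (ℓ + 1)) (π π' : Fin (2 ^ m)), E i π = E i π') ↔
    (∀ p q : Δ × Fin (2 ^ m), (p.1 = q.1 ∧ (q.2 : ℕ) = (p.2 : ℕ) + 1) →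
      ∀ i : Fin (ℓ + 1), (p.1 ∈ E i p.2 ↔ q.1 ∈ E i q.2)) := by
  constructor
  · rintro rigid ⟨δ, π⟩ ⟨_, π'⟩ ⟨rfl, -⟩ i
    rw [rigid i π π']
  · intro hF i
    refine Fin.apply_eq_apply_of_forall_succ fun π π' hsucc => ?_
    ext δ
    exact hF (δ, π) (δ, π') ⟨rfl, hsucc⟩ i
end
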